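/- arXiv:2302.00724 — 12 statements merged into one kernel-verified Lean document; each statement's English description precedes it below -/
import Mathlib

section
/- For every integer σ ≥ 3 and every integer k ≥ 1, let w be the string of length n = kσ over the alphabet {1, …, σ} consisting of σ consecutive blocks, where the c-th block is k copies of the character c (so w = 1^k 2^k ⋯ σ^k). Then w contains at least σ·n/12 fragments that are order-preserving squares and are pairwise distinct as words (i.e., the fragments, viewed as strings, are pairwise unequal). -/
/-- Strings are modelled as functions `w : ℕ → α` (1-indexed); a string of length `n`
uses positions `1..n`. `OpIso w i j ℓ` says the fragments `w[i..i+ℓ-1]` and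
`w[j..j+ℓ-1]` are order-isomorphic. -/
def OpIso {α : Type*} [LinearOrder α] (w : ℕ → α) (i j ℓ : ℕ) : Prop :=
  ∀ a b : ℕ, a < ℓ → b < ℓ → (w (i + a) ≤ w (i + b) ↔ w (j + a) ≤ w (j + b))

/-- The fragment `w[i..i+2ℓ-1]` is an order-preserving square: its two arms of length `ℓ`
are order-isomorphic but not equal as words. -/
def IsOpSquareAt {α : Type*} [LinearOrder α] (w : ℕ → α) (i ℓ : ℕ) : Prop :=
  OpIso w i (i + ℓ) ℓ ∧ ∃ a : ℕ, a < ℓ ∧ w (i + a) ≠ w (i + ℓ + a)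

/-- Position `i` is a leftmost occurrence in `w`: no earlier position carries the same character. -/
def Leftmost {α : Type*} [LinearOrder α] (w : ℕ → α) (i : ℕ) : Prop :=
  ∀ j : ℕ, 1 ≤ j → j < i → w j ≠ w i

/-- `b` is an op-border of the fragment of length `m` starting at position `i`:
its prefix of length `b` is order-isomorphic to its suffix of length `b`. -/
def OpBorderAt {α : Type*} [LinearOrder α] (w : ℕ → α) (i m b : ℕ) : Prop :=
  b ≤ m ∧ OpIso w i (i + (m - b)) b
/-- For σ ≥ 3, k ≥ 1, the string w = 1^k 2^k ⋯ σ^k of length n = kσ contains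
at least σ·n/12 op-square fragments that are pairwise distinct as words. -/
theorem op_squares_lower_bound (σ k : ℕ) (hσ : 3 ≤ σ) (hk : 1 ≤ k)
    (n : ℕ) (hn : n = k * σ)
    (w : ℕ → ℕ) (hw : w = fun i => (i - 1) / k + 1) :
    (σ * n : ℝ) / 12 ≤
      (Set.ncard {u : List ℕ | ∃ i ℓ : ℕ, 1 ≤ i ∧ 1 ≤ ℓ ∧ i + 2 * ℓ - 1 ≤ n ∧
        IsOpSquareAt w i ℓ ∧ u = (List.range (2 * ℓ)).map (fun a => w (i + a))} : ℝ) := by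
  
  have hk0 : 0 < k := hk
  have hwv : ∀ i, w i = (i - 1) / k + 1 := by intro i; rw [hw]
  subst hn
  set U : Set (List ℕ) := {u : List ℕ | ∃ i ℓ : ℕ, 1 ≤ i ∧ 1 ≤ ℓ ∧ i + 2 * ℓ - 1 ≤ k * σ ∧
        IsOpSquareAt w i ℓ ∧ u = (List.range (2 * ℓ)).map (fun a => w (i + a))} with hU
  set M : ℕ := (σ + 2) / 4 with hMdef
  obtain ⟨b1, b2, b3, b4⟩ : 4 * M ≤ σ + 2 ∧ σ ≤ 4 * M + 1 ∧ 2 * M + 1 ≤ σ ∧ 1 ≤ M := by omega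
  -- shift lemma
  have hshift : ∀ x m : ℕ, 1 ≤ x → w (x + m * k) = w x + m := by
    intro x m hx
    rw [hwv, hwv]
    have h1 : x + m * k - 1 = (x - 1) + m * k := by omega
    rw [h1, Nat.add_mul_div_right _ _ hk0]
    ring
  -- distinguishing positions lemma
  have hlt : ∀ i i' N : ℕ, 1 ≤ i → k ≤ N → i < i' → ∃ a, a < N ∧ w (i + a) ≠ w (i' + a) := by
    intro i i' N hi hkN hii
    obtain ⟨q, r, hrk, hqr⟩ : ∃ q r, r < k ∧ i - 1 = k * q + r :=
      ⟨(i - 1) / k, (i - 1) % k, Nat.mod_lt _ hk0, (Nat.div_add_mod (i - 1) k).symm⟩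
    refine ⟨k - 1 - r, by omega, ?_⟩
    have e1 : i + (k - 1 - r) - 1 = k * q + (k - 1) := by omega
    have w1 : w (i + (k - 1 - r)) = q + 1 := by
      rw [hwv, e1, Nat.mul_add_div hk0, Nat.div_eq_of_lt (by omega)]
    have w2 : q + 1 ≤ (i' + (k - 1 - r) - 1) / k := by
      rw [Nat.le_div_iff_mul_le hk0]
      have : (q + 1) * k = k * q + k := by ring
      omega
    have w3 : w (i' + (k - 1 - r)) = (i' + (k - 1 - r) - 1) / k + 1 := hwv _
    omega
  -- list extraction
  have hmap : ∀ (N : ℕ) (g1 g2 : ℕ → ℕ), (List.range N).map g1 = (List.range N).map g2 →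
      ∀ a, a < N → g1 a = g2 a := by
    intro N g1 g2 h a ha
    have := congrArg (fun l => l[a]?) h
    simpa [List.getElem?_map, List.getElem?_range, ha] using this
  set f : ℕ × ℕ → List ℕ := fun p => (List.range (2 * (p.2 * k))).map (fun a => w (p.1 + a))
    with hf
  set T : Finset (ℕ × ℕ) := Finset.Icc 1 ((σ - 2 * M) * k + 1) ×ˢ Finset.Icc 1 M with hT
  -- membership
  have hmem : ∀ p ∈ T, f p ∈ U := by
    rintro ⟨i, m⟩ hp
    simp only [hT, Finset.mem_product, Finset.mem_Icc] at hp
    obtain ⟨⟨hi1, hi2⟩, hm1, hm2⟩ := hp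
    refine ⟨i, m * k, hi1, Nat.mul_pos hm1 hk0, ?_, ⟨?_, 0, Nat.mul_pos hm1 hk0, ?_⟩, rfl⟩
    · rw [Nat.sub_le_iff_le_add]
      have e2 : (σ - 2 * M) * k + 2 * (M * k) = k * σ := by
        have : (σ - 2 * M) + 2 * M = σ := by omega
        calc (σ - 2 * M) * k + 2 * (M * k) = ((σ - 2 * M) + 2 * M) * k := by ring
          _ = k * σ := by rw [this]; ring
      have e3 : m * k ≤ M * k := Nat.mul_le_mul_right k hm2
      omega
    · intro a b haa hbb
      have s1 : w (i + m * k + a) = w (i + a) + m := by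
        rw [show i + m * k + a = (i + a) + m * k by ring, hshift _ _ (by omega)]
      have s2 : w (i + m * k + b) = w (i + b) + m := by
        rw [show i + m * k + b = (i + b) + m * k by ring, hshift _ _ (by omega)]
      rw [s1, s2]; omega
    · have s1 : w (i + m * k + 0) = w (i + 0) + m := by
        rw [show i + m * k + 0 = (i + 0) + m * k by ring, hshift _ _ (by omega)]
      omega
  -- injectivity
  have hinj : Set.InjOn f T := by
    rintro ⟨i, m⟩ hp ⟨i', m'⟩ hq hfeq
    simp only [hT, Finset.coe_product, Set.mem_prod, Finset.coe_Icc, Set.mem_Icc] at hp hq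
    have hlen : 2 * (m * k) = 2 * (m' * k) := by
      have := congrArg List.length hfeq
      simpa [hf] using this
    have hmm : m = m' := by
      have : m * k = m' * k := by omega
      exact Nat.eq_of_mul_eq_mul_right hk0 this
    subst hmm
    have hall : ∀ a, a < 2 * (m * k) → w (i + a) = w (i' + a) :=
      hmap _ _ _ (by simpa [hf] using hfeq)
    have hkN : k ≤ 2 * (m * k) := by
      have : 1 * k ≤ m * k := Nat.mul_le_mul_right k hp.2.1
      omega
    have : i = i' := by
      rcases lt_trichotomy i i' with h | h | h
      · obtain ⟨a, ha, hne⟩ := hlt i i' _ hp.1.1 hkN h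
        exact absurd (hall a ha) hne
      · exact h
      · obtain ⟨a, ha, hne⟩ := hlt i' i _ hq.1.1 hkN h
        exact absurd (hall a ha).symm hne
    simp [this]
  -- U is finite
  have hUfin : U.Finite := by
    apply Set.Finite.subset (Set.finite_range
      (fun p : Finset.Icc 1 (k*σ) ×ˢ Finset.Icc 1 (k*σ) =>
        (List.range (2 * (p.1 : ℕ × ℕ).2)).map (fun a => w ((p.1 : ℕ × ℕ).1 + a))))
    rintro u ⟨i, ℓ, hi, hℓ, hbound, _, rfl⟩
    refine ⟨⟨(i, ℓ), ?_⟩, rfl⟩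
    simp only [Finset.mem_product, Finset.mem_Icc]
    omega
  -- counting
  have hsub : ↑(T.image f) ⊆ U := by
    intro u hu
    simp only [Finset.coe_image, Set.mem_image, Finset.mem_coe] at hu
    obtain ⟨p, hp, rfl⟩ := hu
    exact hmem p hp
  have hcard1 : (T.image f).card = ((σ - 2 * M) * k + 1) * M := by
    rw [Finset.card_image_of_injOn hinj, hT, Finset.card_product]
    simp [Nat.card_Icc]
  have hcard2 : ((σ - 2 * M) * k + 1) * M ≤ U.ncard := by
    rw [← hcard1, ← Set.ncard_coe_finset]
    exact Set.ncard_le_ncard hsub hUfin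
  -- key arithmetic
  have hkey2 : σ * σ ≤ 12 * (M * (σ - 2 * M)) := by
    zify [show 2 * M ≤ σ by omega]
    nlinarith [mul_nonneg (by push_cast; omega : (0:ℤ) ≤ (σ:ℤ) + 2 - 4 * M)
        (by push_cast; omega : (0:ℤ) ≤ 4 * (M:ℤ) + 1 - σ),
      mul_le_mul_of_nonneg_left (by push_cast; omega : (2:ℤ) * M + 1 ≤ σ)
        (by positivity : (0:ℤ) ≤ 4 * (M:ℤ))]
  have hkey : σ * (k * σ) ≤ 12 * (((σ - 2 * M) * k + 1) * M) := by
    have e : 12 * (((σ - 2 * M) * k + 1) * M) = (12 * (M * (σ - 2 * M))) * k + 12 * M := by ring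
    calc σ * (k * σ) = (σ * σ) * k := by ring
      _ ≤ (12 * (M * (σ - 2 * M))) * k := Nat.mul_le_mul_right k hkey2
      _ ≤ 12 * (((σ - 2 * M) * k + 1) * M) := by rw [e]; exact Nat.le_add_right _ _
  -- conclude
  rw [div_le_iff₀ (by norm_num : (0:ℝ) < 12)]
  have hfinal : σ * (k * σ) ≤ U.ncard * 12 := by omega
  exact_mod_cast hfinal
end

section
/- Let σ ≥ 2 and k ≥ 1 be integers and let w = 1^k 2^k ⋯ σ^k be the string of length σk over {1, …, σ} consisting of σ consecutive blocks, the c-th block being k copies of the character c. Then for every integer i with 1 ≤ i ≤ ⌊σ/2⌋ and every position j with 1 ≤ j ≤ σk − 2ik + 1, the fragment w[j..j+2ik−1] is an order-preserving square. -/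
/-- In w = 1^k 2^k ⋯ σ^k (σ ≥ 2, k ≥ 1), for every 1 ≤ i ≤ ⌊σ/2⌋ and every
1 ≤ j ≤ σk − 2ik + 1, the fragment w[j..j+2ik−1] is an order-preserving square. -/
theorem block_string_fragments_are_op_squares (σ k : ℕ) (hσ : 2 ≤ σ) (hk : 1 ≤ k)
    (w : ℕ → ℕ) (hw : w = fun i => (i - 1) / k + 1)
    (i j : ℕ) (hi1 : 1 ≤ i) (hi2 : i ≤ σ / 2)
    (hj1 : 1 ≤ j) (hj2 : j ≤ σ * k - 2 * i * k + 1) :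
    IsOpSquareAt w j (i * k) := by

  have hk0 : 0 < k := hk
  have key : ∀ a : ℕ, w (j + i * k + a) = w (j + a) + i := by
    intro a
    subst hw
    simp only
    have h1 : j + i * k + a - 1 = (j + a - 1) + i * k := by omega
    rw [h1, Nat.add_mul_div_right _ _ hk0]
    ring
  constructor
  · intro a b _ _
    rw [key a, key b]
    omega
  · exact ⟨0, by positivity, by rw [key 0]; omega⟩
end

section
/- If b is an op-border of a string s of length n with 0 ≤ b < n, then n − b is an initial op-period of s. -/
/-- p is an initial op-period of the string w of length n: writing
w = b₁b₂⋯b_f b_{f+1} with |b₁| = ⋯ = |b_f| = p, f = ⌊n/p⌋ and |b_{f+1}| = n mod p,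
consecutive full blocks are order-isomorphic, and each full block's prefix of length
n mod p is order-isomorphic to the incomplete block. -/
def InitialOpPeriod {α : Type*} [LinearOrder α] (w : ℕ → α) (n p : ℕ) : Prop :=
  1 ≤ p ∧ p ≤ n ∧
  (∀ j : ℕ, 1 ≤ j → j + 1 ≤ n / p → OpIso w (1 + (j - 1) * p) (1 + j * p) p) ∧
  (∀ j : ℕ, 1 ≤ j → j ≤ n / p → OpIso w (1 + (j - 1) * p) (1 + (n / p) * p) (n % p))

/-- Shifting a window that stays inside the border by one period. -/
lemma shift_lemma {α : Type*} [LinearOrder α] (w : ℕ → α) (p b r : ℕ)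
    (hiso : OpIso w 1 (1 + p) b) (j : ℕ) (hj : 1 ≤ j)
    (h : (j - 1) * p + r ≤ b) :
    OpIso w (1 + (j - 1) * p) (1 + j * p) r := by
  obtain ⟨j', rfl⟩ : ∃ j', j = j' + 1 := ⟨j - 1, by omega⟩
  simp only [Nat.add_sub_cancel] at h ⊢
  intro a c ha hc
  have h1 : j' * p + a < b := by omega
  have h2 : j' * p + c < b := by omega
  have key := hiso (j' * p + a) (j' * p + c) h1 h2
  have e1 : ∀ x, 1 + j' * p + x = 1 + (j' * p + x) := fun x => by ring
  have e2 : ∀ x, 1 + (j' + 1) * p + x = 1 + p + (j' * p + x) := fun x => by ring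
  rw [e1 a, e1 c, e2 a, e2 c]
  exact key

lemma chain_lemma {α : Type*} [LinearOrder α] (w : ℕ → α) (p b r f : ℕ)
    (hiso : OpIso w 1 (1 + p) b) (hrp : r ≤ p) (hf : 1 ≤ f)
    (hb : b + p = f * p + r) :
    ∀ d j, 1 ≤ j → j + d = f → OpIso w (1 + (j - 1) * p) (1 + f * p) r := by
  have hbval : b = (f - 1) * p + r := by
    obtain ⟨f', rfl⟩ : ∃ f', f = f' + 1 := ⟨f - 1, by omega⟩
    have : (f' + 1) * p = f' * p + p := by ring
    simp only [Nat.add_sub_cancel]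
    omega
  intro d
  induction d with
  | zero =>
    intro j hj hjf
    have hjf' : j = f := by omega
    subst hjf'
    exact shift_lemma w p b r hiso j hj (by omega)
  | succ d ih =>
    intro j hj hjf
    have hmul : (j - 1) * p ≤ (f - 1) * p := Nat.mul_le_mul_right p (by omega)
    have step := shift_lemma w p b r hiso j hj (by omega)
    have next := ih (j + 1) (by omega) (by omega)
    simp only [Nat.add_sub_cancel] at next
    intro a c ha hc
    exact (step a c ha hc).trans (next a c ha hc)

/-- If b is an op-border of a string s of length n with 0 ≤ b < n,
then n − b is an initial op-period of s. -/
theorem op_border_gives_initial_op_period {α : Type*} [LinearOrder α]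
    (w : ℕ → α) (n b : ℕ) (hb : b < n) (hbord : OpBorderAt w 1 n b) :
    InitialOpPeriod w n (n - b) := by
  obtain ⟨hbn, hiso⟩ := hbord
  set p := n - b with hp
  have hp1 : 1 ≤ p := by omega
  have hpn : p ≤ n := by omega
  have hnbp : n = b + p := by omega
  have hdm := Nat.div_add_mod n p
  have hrlt : n % p < p := Nat.mod_lt _ (by omega)
  have hf1 : 1 ≤ n / p := (Nat.one_le_div_iff (by omega)).mpr hpn
  have hcomm : (n / p) * p = p * (n / p) := Nat.mul_comm _ _
  refine ⟨hp1, hpn, ?_, ?_⟩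
  · intro j hj hjf
    have hmul : (j + 1) * p ≤ n := (Nat.le_div_iff_mul_le (by omega)).mp hjf
    have e : (j + 1) * p = (j - 1) * p + p + p := by
      obtain ⟨j', rfl⟩ : ∃ j', j = j' + 1 := ⟨j - 1, by omega⟩
      simp only [Nat.add_sub_cancel]
      ring
    exact shift_lemma w p b p hiso j hj (by omega)
  · intro j hj hjf
    exact chain_lemma w p b (n % p) (n / p) hiso (le_of_lt hrlt) hf1
      (by omega) (n / p - j) j hj (by omega)
end

section
/- Let s be a string and ℓ ≥ 1 an integer with 2ℓ ≤ |s|, and suppose the prefix s[1..2ℓ] is an order-preserving square, i.e., s[1..ℓ] ≈ s[ℓ+1..2ℓ] and s[1..ℓ] ≠ s[ℓ+1..2ℓ]. Then there exists a position i with ℓ + 1 ≤ i ≤ 2ℓ such that the character s[i] does not occur in s[1..ℓ], and both i and i − ℓ are leftmost occurrences in s. -/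
/-!
Let `u` and `v` be the two arms. Among the positions where `u a < v a`, take one where `v a`
is largest, and let `k` be the first position of `v` carrying that largest value `c`. If `c`
occurred in `u`, say `u m = c`, then order-isomorphism would give `v m > c` together with
`u m < v m`, contradicting the maximality of `c`. So `v k` is a new letter, `k` is its first
occurrence in `v`, and since equalities are transported by order-isomorphism, `k` is also
a first occurrence in `u`. The case `u a > v a` is the same argument in the dual order.
-/

namespace OpIso

variable {α : Type*} [LinearOrder α] {w : ℕ → α} {i j ℓ : ℕ}

theorem eq_iff (h : OpIso w i j ℓ) {a b : ℕ} (ha : a < ℓ) (hb : b < ℓ) :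
    w (i + a) = w (i + b) ↔ w (j + a) = w (j + b) := by
  rw [le_antisymm_iff, le_antisymm_iff, h a b ha hb, h b a hb ha]

theorem lt_iff (h : OpIso w i j ℓ) {a b : ℕ} (ha : a < ℓ) (hb : b < ℓ) :
    w (i + a) < w (i + b) ↔ w (j + a) < w (j + b) := by
  rw [lt_iff_not_ge, lt_iff_not_ge, h b a hb ha]

theorem toDual (h : OpIso w i j ℓ) : OpIso (OrderDual.toDual ∘ w) i j ℓ :=
  fun a b ha hb => h b a hb ha

theorem exists_new_first_letter_of_lt (h : OpIso w i j ℓ) {a₀ : ℕ} (ha₀ : a₀ < ℓ)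
    (hlt : w (i + a₀) < w (j + a₀)) :
    ∃ k < ℓ, (∀ m < ℓ, w (i + m) ≠ w (j + k)) ∧ ∀ b < k, w (j + b) ≠ w (j + k) := by
  classical
  obtain ⟨p, hpT, hmax⟩ :=
    ((Finset.range ℓ).filter fun a => w (i + a) < w (j + a)).exists_max_image
      (fun a => w (j + a)) ⟨a₀, by simp [ha₀, hlt]⟩
  simp only [Finset.mem_filter, Finset.mem_range] at hpT hmax
  have hex : ∃ k, k < ℓ ∧ w (j + k) = w (j + p) := ⟨p, hpT.1, rfl⟩
  refine ⟨Nat.find hex, (Nat.find_spec hex).1, fun m hm heq => ?_, fun b hb heq => ?_⟩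
  · rw [(Nat.find_spec hex).2] at heq
    have hpm : w (j + p) < w (j + m) := (h.lt_iff hpT.1 hm).1 (heq ▸ hpT.2)
    exact (hmax m ⟨hm, heq ▸ hpm⟩).not_gt hpm
  · exact Nat.find_min hex hb ⟨hb.trans (Nat.find_spec hex).1, heq.trans (Nat.find_spec hex).2⟩

theorem exists_new_first_letter_of_ne (h : OpIso w i j ℓ) {a₀ : ℕ} (ha₀ : a₀ < ℓ)
    (hne : w (i + a₀) ≠ w (j + a₀)) :
    ∃ k < ℓ, (∀ m < ℓ, w (i + m) ≠ w (j + k)) ∧ ∀ b < k, w (j + b) ≠ w (j + k) := by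
  rcases hne.lt_or_gt with hlt | hgt
  · exact h.exists_new_first_letter_of_lt ha₀ hlt
  · exact h.toDual.exists_new_first_letter_of_lt ha₀ hgt

end OpIso

theorem op_square_gives_leftmost_pair_general {α : Type*} [LinearOrder α]
    (w : ℕ → α) (ℓ : ℕ)
    (hsq : IsOpSquareAt w 1 ℓ) :
    ∃ i : ℕ, ℓ + 1 ≤ i ∧ i ≤ 2 * ℓ ∧ (∀ j : ℕ, 1 ≤ j → j ≤ ℓ → w j ≠ w i) ∧
      Leftmost w i ∧ Leftmost w (i - ℓ) := by
  obtain ⟨hiso, a₀, ha₀, hne⟩ := hsq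
  obtain ⟨k, hk, hnew, hfirst⟩ := hiso.exists_new_first_letter_of_ne ha₀ hne
  refine ⟨1 + ℓ + k, by omega, by omega, fun j hj hjℓ => ?_, fun j hj hjk => ?_, ?_⟩
  · obtain ⟨m, rfl⟩ := Nat.exists_eq_add_of_le hj
    exact hnew m (by omega)
  · rcases lt_or_ge j (1 + ℓ) with hjℓ | hjℓ
    · obtain ⟨m, rfl⟩ := Nat.exists_eq_add_of_le hj
      exact hnew m (by omega)
    · obtain ⟨m, rfl⟩ := Nat.exists_eq_add_of_le hjℓ
      exact hfirst m (by omega)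
  · rw [show 1 + ℓ + k - ℓ = 1 + k by omega]
    intro j hj hjk
    obtain ⟨m, rfl⟩ := Nat.exists_eq_add_of_le hj
    exact fun heq => hfirst m (by omega) ((hiso.eq_iff (by omega) hk).1 heq)

/-- If the prefix s[1..2ℓ] is an op-square then there is a position i,
ℓ+1 ≤ i ≤ 2ℓ, whose character does not occur in s[1..ℓ], and both i and i − ℓ are
leftmost occurrences in s. -/
theorem op_square_gives_leftmost_pair {α : Type*} [LinearOrder α]
    (w : ℕ → α) (n ℓ : ℕ) (hℓ : 1 ≤ ℓ) (h2ℓ : 2 * ℓ ≤ n)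
    (hsq : IsOpSquareAt w 1 ℓ) :
    ∃ i : ℕ, ℓ + 1 ≤ i ∧ i ≤ 2 * ℓ ∧ (∀ j : ℕ, 1 ≤ j → j ≤ ℓ → w j ≠ w i) ∧
      Leftmost w i ∧ Leftmost w (i - ℓ) :=
  op_square_gives_leftmost_pair_general w ℓ hsq
end

section
/- Let s be a string over an alphabet of size σ. Then the number of integers ℓ ≥ 1 with 2ℓ ≤ |s| such that the prefix s[1..2ℓ] is an order-preserving square is at most σ(σ−1)/2. -/
/-- If no position of the second arm is a leftmost occurrence, every character of the
second arm occurs in the first arm. -/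
lemma occ_first_arm {α : Type*} [LinearOrder α] (w : ℕ → α) (ℓ : ℕ)
    (hno : ∀ a, a < ℓ → ¬ Leftmost w (1 + ℓ + a)) :
    ∀ a, a < ℓ → ∃ q, q < ℓ ∧ w (1 + q) = w (1 + ℓ + a) := by
  intro a
  induction a using Nat.strong_induction_on with
  | _ a IH =>
    intro ha
    have h := hno a ha
    unfold Leftmost at h
    push_neg at h
    obtain ⟨j, hj1, hjlt, hje⟩ := h
    rcases le_or_gt j ℓ with hle | hgt
    · refine ⟨j - 1, by omega, ?_⟩
      rw [show 1 + (j - 1) = j by omega]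
      exact hje
    · obtain ⟨q, hq, hqe⟩ := IH (j - ℓ - 1) (by omega) (by omega)
      refine ⟨q, hq, ?_⟩
      rw [hqe, show 1 + ℓ + (j - ℓ - 1) = j by omega]
      exact hje

/-- Every op-square prefix has a leftmost occurrence in its second arm. -/
lemma exists_leftmost_arm {α : Type*} [LinearOrder α] (w : ℕ → α) (ℓ : ℕ)
    (h : IsOpSquareAt w 1 ℓ) : ∃ a, a < ℓ ∧ Leftmost w (1 + ℓ + a) := by
  by_contra hno
  push_neg at hno
  have occ := occ_first_arm w ℓ hno
  obtain ⟨iso, a₀, ha₀, hne⟩ := h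
  rcases hne.lt_or_gt with h1 | h2
  · -- there is an offset with w(1+c) < w(1+ℓ+c); take one maximizing w(1+c)
    have hT : ((Finset.range ℓ).filter (fun c => w (1 + c) < w (1 + ℓ + c))).Nonempty :=
      ⟨a₀, by simp [Finset.mem_filter, Finset.mem_range, ha₀, h1]⟩
    obtain ⟨c, hcT, hmax⟩ := Finset.exists_max_image _ (fun c => w (1 + c)) hT
    rw [Finset.mem_filter, Finset.mem_range] at hcT
    obtain ⟨hcℓ, hc⟩ := hcT
    obtain ⟨q, hqℓ, hq⟩ := occ c hcℓ
    have hqlt : w (1 + q) < w (1 + ℓ + q) := by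
      have hiso := iso q c hqℓ hcℓ
      have : ¬ w (1 + q) ≤ w (1 + c) := by rw [hq]; exact not_le.mpr hc
      have h2' : ¬ w (1 + ℓ + q) ≤ w (1 + ℓ + c) := fun hh => this (hiso.mpr hh)
      rw [hq]
      exact lt_of_not_ge h2'
    have := hmax q (by
      rw [Finset.mem_filter, Finset.mem_range]; exact ⟨hqℓ, hqlt⟩)
    rw [hq] at this
    exact absurd this (not_le.mpr hc)
  · -- symmetric: w(1+ℓ+c) < w(1+c); take c minimizing w(1+c)
    have hT : ((Finset.range ℓ).filter (fun c => w (1 + ℓ + c) < w (1 + c))).Nonempty :=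
      ⟨a₀, by simp [Finset.mem_filter, Finset.mem_range, ha₀, h2]⟩
    obtain ⟨c, hcT, hmin⟩ := Finset.exists_min_image _ (fun c => w (1 + c)) hT
    rw [Finset.mem_filter, Finset.mem_range] at hcT
    obtain ⟨hcℓ, hc⟩ := hcT
    obtain ⟨q, hqℓ, hq⟩ := occ c hcℓ
    have hqlt : w (1 + ℓ + q) < w (1 + q) := by
      have hiso := iso c q hcℓ hqℓ
      have : ¬ w (1 + c) ≤ w (1 + q) := by rw [hq]; exact not_le.mpr hc
      have h2' : ¬ w (1 + ℓ + c) ≤ w (1 + ℓ + q) := fun hh => this (hiso.mpr hh)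
      rw [hq]
      exact lt_of_not_ge h2'
    have := hmin q (by
      rw [Finset.mem_filter, Finset.mem_range]; exact ⟨hqℓ, hqlt⟩)
    rw [hq] at this
    exact absurd this (not_le.mpr hc)

/-- Two distinct op-square prefixes yield distinct character pairs. -/
lemma no_collision {α : Type*} [LinearOrder α] (w : ℕ → α) {ℓ ℓ' a a' : ℕ}
    (hlt : ℓ < ℓ') (ha : a < ℓ) (ha' : a' < ℓ')
    (iso : OpIso w 1 (1 + ℓ) ℓ)
    (hL : Leftmost w (1 + ℓ + a)) (hL' : Leftmost w (1 + ℓ' + a'))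
    (hpair : s(w (1 + a), w (1 + ℓ + a)) = s(w (1 + a'), w (1 + ℓ' + a'))) :
    False := by
  rw [Sym2.eq_iff] at hpair
  rcases hpair with ⟨hx, hy⟩ | ⟨hx, hy⟩
  · -- same first-arm and second-arm characters
    rcases lt_trichotomy (ℓ + a) (ℓ' + a') with hc | hc | hc
    · exact hL' (1 + ℓ + a) (by omega) (by omega) hy
    · -- equal leftmost positions: a' < a and w(1+a) = w(1+a')
      have ha'a : a' < a := by omega
      have e1 : w (1 + ℓ + a) ≤ w (1 + ℓ + a') :=
        (iso a a' ha (by omega)).mp (le_of_eq hx)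
      have e2 : w (1 + ℓ + a') ≤ w (1 + ℓ + a) :=
        (iso a' a (by omega) ha).mp (le_of_eq hx.symm)
      exact hL (1 + ℓ + a') (by omega) (by omega) (le_antisymm e2 e1)
    · exact hL (1 + ℓ' + a') (by omega) (by omega) hy.symm
  · -- crossed: w(1+a) equals the leftmost character at 1+ℓ'+a'
    exact hL' (1 + a) (by omega) (by omega) hx

/-- A string over an alphabet of size σ has at most σ(σ−1)/2 prefixes
that are op-squares. -/
theorem op_square_prefixes_le_choose (σ : ℕ) (α : Type) [LinearOrder α] [Fintype α]
    (hcard : Fintype.card α = σ) (w : ℕ → α) (n : ℕ) :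
    Set.ncard {ℓ : ℕ | 1 ≤ ℓ ∧ 2 * ℓ ≤ n ∧ IsOpSquareAt w 1 ℓ} ≤ σ * (σ - 1) / 2 := by
  classical
  subst hcard
  set S : Set ℕ := {ℓ : ℕ | 1 ≤ ℓ ∧ 2 * ℓ ≤ n ∧ IsOpSquareAt w 1 ℓ} with hS
  have key : ∀ ℓ ∈ S, ∃ a, a < ℓ ∧ Leftmost w (1 + ℓ + a) := fun ℓ hℓ =>
    exists_leftmost_arm w ℓ hℓ.2.2
  choose! f hf1 hf2 using key
  set F : ℕ → Sym2 α := fun ℓ => s(w (1 + f ℓ), w (1 + ℓ + f ℓ)) with hF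
  have hmaps : ∀ ℓ ∈ S, F ℓ ∈ {p : Sym2 α | ¬ p.IsDiag} := by
    intro ℓ hℓ
    simp only [Set.mem_setOf_eq, hF, Sym2.mk_isDiag_iff]
    have h1 : 1 ≤ ℓ := hℓ.1
    have h2 := hf1 ℓ hℓ
    exact hf2 ℓ hℓ (1 + f ℓ) (by omega) (by omega)
  have hinj : S.InjOn F := by
    intro ℓ₁ h₁ ℓ₂ h₂ he
    by_contra hne
    rcases Ne.lt_or_gt hne with hlt | hlt
    · exact no_collision w hlt (hf1 _ h₁) (hf1 _ h₂) h₁.2.2.1 (hf2 _ h₁) (hf2 _ h₂) he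
    · exact no_collision w hlt (hf1 _ h₂) (hf1 _ h₁) h₂.2.2.1 (hf2 _ h₂) (hf2 _ h₁) he.symm
  have hle := Set.ncard_le_ncard_of_injOn F hmaps hinj (Set.toFinite _)
  have hcard2 : ({p : Sym2 α | ¬ p.IsDiag}).ncard = (Fintype.card α) * (Fintype.card α - 1) / 2 := by
    rw [Set.ncard_eq_toFinset_card', Set.toFinset_card]
    rw [show Fintype.card ↥{p : Sym2 α | ¬ p.IsDiag} = Fintype.card { p : Sym2 α // ¬ p.IsDiag } from rfl]
    rw [Sym2.card_subtype_not_diag, Nat.choose_two_right]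
  rw [hcard2] at hle
  exact hle
end

section
/- Let s be a string and ℓ ≥ 1 an integer with 2ℓ ≤ |s| such that s[1..ℓ] ≈ s[ℓ+1..2ℓ]. If x is a leftmost occurrence in s with ℓ + 1 ≤ x ≤ 2ℓ, then x − ℓ is also a leftmost occurrence in s. -/
/-- If s[1..ℓ] ≈ s[ℓ+1..2ℓ] and x is a leftmost occurrence with
ℓ+1 ≤ x ≤ 2ℓ, then x − ℓ is also a leftmost occurrence. -/
theorem leftmost_transfers_to_left_arm {α : Type*} [LinearOrder α]
    (w : ℕ → α) (n ℓ : ℕ) (hℓ : 1 ≤ ℓ) (h2ℓ : 2 * ℓ ≤ n)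
    (hiso : OpIso w 1 (1 + ℓ) ℓ)
    (x : ℕ) (hx1 : ℓ + 1 ≤ x) (hx2 : x ≤ 2 * ℓ) (hlm : Leftmost w x) :
    Leftmost w (x - ℓ) := by
  intro j hj1 hj2 heq
  have ha : j - 1 < ℓ := by omega
  have hb : x - ℓ - 1 < ℓ := by omega
  have h1 := hiso (j - 1) (x - ℓ - 1) ha hb
  have h2 := hiso (x - ℓ - 1) (j - 1) hb ha
  have e1 : 1 + (j - 1) = j := by omega
  have e2 : 1 + (x - ℓ - 1) = x - ℓ := by omega
  have e3 : 1 + ℓ + (j - 1) = j + ℓ := by omega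
  have e4 : 1 + ℓ + (x - ℓ - 1) = x := by omega
  rw [e1, e2, e3, e4] at h1 h2
  have : w (j + ℓ) = w x :=
    le_antisymm (h1.mp heq.le) (h2.mp heq.ge)
  exact hlm (j + ℓ) (by omega) (by omega) this
end

section
/- Let s be a string, k ≥ 1 an integer, and let ℓ < ℓ' < ℓ'' be integers with 2^{k−1} ≤ ℓ, ℓ'' < 2^k and 2ℓ'' ≤ |s|, such that the prefixes s[1..2ℓ], s[1..2ℓ'] and s[1..2ℓ''] are all order-preserving squares. Let Δ = ℓ' − ℓ and Δ' = ℓ'' − ℓ'. Then there exists a leftmost occurrence x in s with Δ < x ≤ ℓ, or there exists a leftmost occurrence x in s with Δ' < x ≤ ℓ'. -/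
section Aux
variable {α : Type*} [LinearOrder α]

private lemma opIso_eq_iff {w : ℕ → α} {i j ℓ : ℕ} (h : OpIso w i j ℓ) {a b : ℕ}
    (ha : a < ℓ) (hb : b < ℓ) : (w (i + a) = w (i + b)) ↔ (w (j + a) = w (j + b)) := by
  constructor <;> intro he
  · exact le_antisymm ((h a b ha hb).1 he.le) ((h b a hb ha).1 he.ge)
  · exact le_antisymm ((h a b ha hb).2 he.le) ((h b a hb ha).2 he.ge)

private lemma selfmap_fix (w : ℕ → α) (f : ℕ → ℕ) :
    ∀ S : Finset ℕ, (∀ x ∈ S, f x ∈ S) →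
    (∀ x ∈ S, ∀ y ∈ S, (w (f x) ≤ w (f y) ↔ w x ≤ w y)) →
    (∀ x ∈ S, ∀ y ∈ S, w x = w y → x = y) →
    ∀ x ∈ S, w (f x) = w x := by
  classical
  intro S
  induction S using Finset.strongInduction with
  | _ S ih =>
    intro hmaps hmono hinj x hx
    have hne : S.Nonempty := ⟨x, hx⟩
    obtain ⟨x₀, hx₀S, hx₀min⟩ := S.exists_min_image w hne
    have hinjf : Set.InjOn f ↑S := by
      intro a ha b hb hab
      apply hinj a ha b hb
      have h1 : w (f a) ≤ w (f b) := by rw [hab]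
      have h2 : w (f b) ≤ w (f a) := by rw [hab]
      exact le_antisymm ((hmono a ha b hb).1 h1) ((hmono b hb a ha).1 h2)
    have himg : S.image f = S := by
      apply Finset.eq_of_subset_of_card_le
      · intro y hy
        obtain ⟨z, hz, rfl⟩ := Finset.mem_image.1 hy
        exact hmaps z hz
      · rw [Finset.card_image_of_injOn hinjf]
    -- x₀ is fixed
    obtain ⟨y₀, hy₀S, hfy₀⟩ := Finset.mem_image.1 (himg.symm ▸ hx₀S)
    have hfx₀ : f x₀ = x₀ := by
      apply hinj (f x₀) (hmaps x₀ hx₀S) x₀ hx₀S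
      apply le_antisymm
      · have : w (f x₀) ≤ w (f y₀) := (hmono x₀ hx₀S y₀ hy₀S).2 (hx₀min y₀ hy₀S)
        rw [hfy₀] at this; exact this
      · exact hx₀min (f x₀) (hmaps x₀ hx₀S)
    by_cases hxx : x = x₀
    · rw [hxx, hfx₀]
    · have hsub : S.erase x₀ ⊂ S := Finset.erase_ssubset hx₀S
      have hmaps' : ∀ y ∈ S.erase x₀, f y ∈ S.erase x₀ := by
        intro y hy
        have hyS := Finset.mem_of_mem_erase hy
        have hyne := Finset.ne_of_mem_erase hy
        refine Finset.mem_erase.2 ⟨?_, hmaps y hyS⟩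
        intro hfy
        exact hyne (hinjf hyS hx₀S (by rw [hfy, hfx₀]))
      exact ih _ hsub hmaps'
        (fun a ha b hb => hmono a (Finset.mem_of_mem_erase ha) b (Finset.mem_of_mem_erase hb))
        (fun a ha b hb => hinj a (Finset.mem_of_mem_erase ha) b (Finset.mem_of_mem_erase hb))
        x (Finset.mem_erase.2 ⟨hxx, hx⟩)

private lemma square_trivial {w : ℕ → α} {ℓ : ℕ} (hiso : OpIso w 1 (1 + ℓ) ℓ)
    (hfix : ∀ x, Leftmost w x → 1 ≤ x → x ≤ ℓ → w x = w (x + ℓ)) :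
    ∀ a, a < ℓ → w (1 + a) = w (1 + ℓ + a) := by
  intro a
  induction a using Nat.strong_induction_on with
  | _ a ih =>
    intro ha
    by_cases hL : Leftmost w (1 + a)
    · have h := hfix (1 + a) hL (by omega) (by omega)
      have e : 1 + a + ℓ = 1 + ℓ + a := by omega
      rw [e] at h; exact h
    · simp only [Leftmost, not_forall] at hL
      obtain ⟨j, hj1, hj2, hj3⟩ := hL
      rw [not_not] at hj3
      have hjb : j = 1 + (j - 1) := by omega
      have hblt : j - 1 < a := by omega
      have h1 : w (1 + (j - 1)) = w (1 + a) := by rw [← hjb]; exact hj3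
      have h2 : w (1 + ℓ + (j - 1)) = w (1 + ℓ + a) :=
        (opIso_eq_iff hiso (by omega) ha).1 h1
      have h3 : w (1 + (j - 1)) = w (1 + ℓ + (j - 1)) := ih (j - 1) hblt (by omega)
      rw [← h1, h3, h2]

end Aux
/-- Given three op-square prefixes s[1..2ℓ], s[1..2ℓ'], s[1..2ℓ''] with
2^{k−1} ≤ ℓ < ℓ' < ℓ'' < 2^k, and Δ = ℓ' − ℓ, Δ' = ℓ'' − ℓ', there is a leftmost
occurrence x with Δ < x ≤ ℓ, or a leftmost occurrence x with Δ' < x ≤ ℓ'. -/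
theorem leftmost_outside_first_block {α : Type*} [LinearOrder α]
    (w : ℕ → α) (n k ℓ ℓ' ℓ'' : ℕ) (hk : 1 ≤ k)
    (h1 : 2 ^ (k - 1) ≤ ℓ) (h2 : ℓ < ℓ') (h3 : ℓ' < ℓ'') (h4 : ℓ'' < 2 ^ k)
    (h5 : 2 * ℓ'' ≤ n)
    (hsq : IsOpSquareAt w 1 ℓ) (hsq' : IsOpSquareAt w 1 ℓ') (hsq'' : IsOpSquareAt w 1 ℓ'') :
    (∃ x : ℕ, Leftmost w x ∧ ℓ' - ℓ < x ∧ x ≤ ℓ) ∨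
    (∃ x : ℕ, Leftmost w x ∧ ℓ'' - ℓ' < x ∧ x ≤ ℓ') := by
  classical
  by_contra hcon
  push_neg at hcon
  obtain ⟨hA, hB⟩ := hcon
  set Δ := ℓ' - ℓ with hΔ
  set Δ' := ℓ'' - ℓ' with hΔ'
  set m := min Δ Δ' with hm
  have hk2 : 2 ^ (k - 1) + 2 ^ (k - 1) = 2 ^ k := by
    have e : 2 ^ k = 2 ^ (k - 1) * 2 := by
      rw [← pow_succ]; congr 1; omega
    omega
  have hDD : Δ + Δ' < ℓ := by omega
  have hmΔ : m ≤ Δ := min_le_left _ _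
  have hmΔ' : m ≤ Δ' := min_le_right _ _
  have hm1 : 1 ≤ m := by omega
  have hmℓ : m < ℓ := by omega
  have hmℓ' : m + ℓ ≤ ℓ' := by omega
  -- every leftmost position ≤ ℓ' is ≤ m
  have hNL : ∀ x, Leftmost w x → x ≤ ℓ' → x ≤ m := by
    intro x hx hxle
    by_contra hgt
    push_neg at hgt
    by_cases hc : Δ' < x
    · have := hB x hx hc; omega
    · have hΔx : Δ < x := by omega
      have := hA x hx hΔx; omega
  -- leftmost representative
  have key : ∀ p, 1 ≤ p → ∃ r, 1 ≤ r ∧ r ≤ p ∧ Leftmost w r ∧ w r = w p := by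
    intro p hp
    have hex : ∃ j, 1 ≤ j ∧ w j = w p := ⟨p, hp, rfl⟩
    refine ⟨Nat.find hex, (Nat.find_spec hex).1, Nat.find_min' hex ⟨hp, rfl⟩, ?_,
      (Nat.find_spec hex).2⟩
    intro j hj1 hj2 hj3
    exact Nat.find_min hex hj2 ⟨hj1, by rw [hj3]; exact (Nat.find_spec hex).2⟩
  have hrep : ∀ p : ℕ, ∃ r, 1 ≤ p → p ≤ ℓ' →
      (1 ≤ r ∧ r ≤ m ∧ Leftmost w r ∧ w r = w p) := by
    intro p
    by_cases hp : 1 ≤ p ∧ p ≤ ℓ'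
    · obtain ⟨r, hr1, hr2, hr3, hr4⟩ := key p hp.1
      exact ⟨r, fun _ _ => ⟨hr1, hNL r hr3 (le_trans hr2 hp.2), hr3, hr4⟩⟩
    · exact ⟨0, fun ha hb => absurd ⟨ha, hb⟩ hp⟩
  choose F hF using hrep
  set f : ℕ → ℕ := fun x => F (x + ℓ) with hf
  set S : Finset ℕ := (Finset.Icc 1 m).filter (fun x => Leftmost w x) with hS
  have hmemS : ∀ x, x ∈ S ↔ (1 ≤ x ∧ x ≤ m ∧ Leftmost w x) := by
    intro x
    simp [hS, Finset.mem_filter, Finset.mem_Icc, and_assoc]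
  have hFx : ∀ x, x ∈ S → (1 ≤ f x ∧ f x ≤ m ∧ Leftmost w (f x) ∧ w (f x) = w (x + ℓ)) := by
    intro x hx
    obtain ⟨hx1, hx2, hx3⟩ := (hmemS x).1 hx
    exact hF (x + ℓ) (by omega) (by omega)
  have hmaps : ∀ x ∈ S, f x ∈ S := by
    intro x hx
    obtain ⟨a1, a2, a3, a4⟩ := hFx x hx
    exact (hmemS (f x)).2 ⟨a1, a2, a3⟩
  have hiso := hsq.1
  have hshift : ∀ x ∈ S, ∀ y ∈ S, (w (x + ℓ) ≤ w (y + ℓ) ↔ w x ≤ w y) := by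
    intro x hx y hy
    obtain ⟨hx1, hx2, -⟩ := (hmemS x).1 hx
    obtain ⟨hy1, hy2, -⟩ := (hmemS y).1 hy
    have h := hiso (x - 1) (y - 1) (by omega) (by omega)
    have e1 : 1 + (x - 1) = x := by omega
    have e2 : 1 + (y - 1) = y := by omega
    have e3 : 1 + ℓ + (x - 1) = x + ℓ := by omega
    have e4 : 1 + ℓ + (y - 1) = y + ℓ := by omega
    rw [e1, e2, e3, e4] at h
    exact h.symm
  have hmono : ∀ x ∈ S, ∀ y ∈ S, (w (f x) ≤ w (f y) ↔ w x ≤ w y) := by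
    intro x hx y hy
    rw [(hFx x hx).2.2.2, (hFx y hy).2.2.2]
    exact hshift x hx y hy
  have hinj : ∀ x ∈ S, ∀ y ∈ S, w x = w y → x = y := by
    intro x hx y hy hxy
    obtain ⟨hx1, -, hx3⟩ := (hmemS x).1 hx
    obtain ⟨hy1, -, hy3⟩ := (hmemS y).1 hy
    rcases lt_trichotomy x y with h | h | h
    · exact absurd hxy (hy3 x hx1 h)
    · exact h
    · exact absurd hxy.symm (hx3 y hy1 h)
  have hfixS := selfmap_fix w f S hmaps hmono hinj
  have hfix : ∀ x, Leftmost w x → 1 ≤ x → x ≤ ℓ → w x = w (x + ℓ) := by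
    intro x hx hx1 hx2
    have hxm : x ≤ m := hNL x hx (by omega)
    have hxS : x ∈ S := (hmemS x).2 ⟨hx1, hxm, hx⟩
    rw [← hfixS x hxS, (hFx x hxS).2.2.2]
  obtain ⟨a, ha, hne⟩ := hsq.2
  exact hne (square_trivial hiso hfix a ha)
end

section
/- Let s be a string, let u = s[1..m] be a prefix of s, and let b be an op-border of u with 0 < b < m; set Δ = m − b. If x is a leftmost occurrence in s with Δ < x ≤ m, then for every integer p ≥ 0 with p·Δ < x, the position x − p·Δ is a leftmost occurrence in s. -/
/-- If b is an op-border of the prefix u = s[1..m] with 0 < b < m and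
Δ = m − b, and x is a leftmost occurrence with Δ < x ≤ m, then x − p·Δ is a leftmost
occurrence for every p ≥ 0 with p·Δ < x. -/
theorem leftmost_in_all_earlier_blocks {α : Type*} [LinearOrder α]
    (w : ℕ → α) (m b : ℕ) (hb0 : 0 < b) (hbm : b < m)
    (hbord : OpBorderAt w 1 m b)
    (x : ℕ) (hx1 : m - b < x) (hx2 : x ≤ m) (hlm : Leftmost w x) :
    ∀ p : ℕ, p * (m - b) < x → Leftmost w (x - p * (m - b)) := by
  have step : ∀ y : ℕ, m - b < y → y ≤ m → Leftmost w y → Leftmost w (y - (m - b)) := by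
    intro y hy1 hy2 hlmy j hj1 hj2 heq
    have hiso := hbord.2
    have h1 : j - 1 < b := by omega
    have h2 : y - (m - b) - 1 < b := by omega
    have e1 := hiso (j - 1) (y - (m - b) - 1) h1 h2
    have e2 := hiso (y - (m - b) - 1) (j - 1) h2 h1
    have hJ : 1 + (j - 1) = j := by omega
    have hY : 1 + (y - (m - b) - 1) = y - (m - b) := by omega
    have hJ' : 1 + (m - b) + (j - 1) = j + (m - b) := by omega
    have hY' : 1 + (m - b) + (y - (m - b) - 1) = y := by omega
    rw [hJ, hY, hJ', hY'] at e1
    rw [hY, hJ, hY', hJ'] at e2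
    exact hlmy (j + (m - b)) (by omega) (by omega)
      (le_antisymm (e1.1 heq.le) (e2.1 heq.ge))
  intro p
  induction p with
  | zero => intro _; simpa using hlm
  | succ p ih =>
    intro h
    rw [Nat.succ_mul] at h ⊢
    have hp : p * (m - b) < x := by omega
    have hL := ih hp
    have := step (x - p * (m - b)) (by omega) (by omega) hL
    have heq : x - p * (m - b) - (m - b) = x - (p * (m - b) + (m - b)) := by omega
    rwa [heq] at this
end

section
/- Let s be a string, let u = s[1..m] be a prefix of s, and let b be an op-border of u with 0 < b < m; set Δ = m − b and f = ⌊m/Δ⌋, and assume f ≥ 2. If there is a leftmost occurrence x in s with Δ < x ≤ 2Δ, then there exists an integer r with 1 ≤ r ≤ Δ such that r + p·Δ is a leftmost occurrence in s for every integer p with 0 ≤ p ≤ f − 1. -/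
open Classical in
lemma aux_block {α : Type*} [LinearOrder α] (w : ℕ → α) (Δ b e : ℕ)
    (hΔ : 1 ≤ Δ) (heb : e * Δ ≤ b)
    (H : ∀ i j : ℕ, 1 ≤ i → i ≤ b → 1 ≤ j → j ≤ b → (w i < w j ↔ w (i + Δ) < w (j + Δ))) :
    ∀ n j : ℕ, ((Finset.Icc 1 ((e+1)*Δ)).filter (fun p => w j < w p)).card ≤ n →
      1 ≤ j → j ≤ e * Δ → Leftmost w j → w j < w (j + Δ) →
      ∃ y, e * Δ < y ∧ y ≤ (e+1) * Δ ∧ Leftmost w y := by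
  intro n
  induction n using Nat.strong_induction_on with
  | _ n ih =>
  intro j hcard hj1 hj2 hlm hinc
  set q : ℕ := (e * Δ - j) / Δ with hq
  have hdm := Nat.div_add_mod (e * Δ - j) Δ
  have hmod : (e * Δ - j) % Δ < Δ := Nat.mod_lt _ (by omega)
  have hcomm : Δ * q = q * Δ := Nat.mul_comm _ _
  have hq1exp : (q + 1) * Δ = q * Δ + Δ := by ring
  have heexp : (e + 1) * Δ = e * Δ + Δ := by ring
  rw [← hq] at hdm
  have hq1 : j + q * Δ ≤ e * Δ := by omega
  have hq2 : e * Δ < j + (q + 1) * Δ := by omega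
  have step : ∀ a, a ≤ q → w (j + a * Δ) < w (j + (a + 1) * Δ) := by
    intro a
    induction a with
    | zero => intro _; simpa using hinc
    | succ a iha =>
      intro ha
      have h1 : w (j + a * Δ) < w (j + (a + 1) * Δ) := iha (by omega)
      have hle1 : j + a * Δ ≤ b := by nlinarith [Nat.mul_le_mul_right Δ (show a ≤ q by omega)]
      have hle2 : j + (a + 1) * Δ ≤ b := by
        nlinarith [Nat.mul_le_mul_right Δ (show a + 1 ≤ q by omega)]
      have := (H (j + a * Δ) (j + (a + 1) * Δ) (by omega) hle1 (by omega) hle2).mp h1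
      have e1 : j + a * Δ + Δ = j + (a + 1) * Δ := by ring
      have e2 : j + (a + 1) * Δ + Δ = j + (a + 2) * Δ := by ring
      rw [e1, e2] at this
      convert this using 3 <;> ring
  have chain : ∀ a, a ≤ q → w j < w (j + (a + 1) * Δ) := by
    intro a
    induction a with
    | zero => intro _; simpa using step 0 (by omega)
    | succ a iha =>
      intro ha
      exact lt_trans (iha (by omega)) (step (a + 1) ha)
  set z : ℕ := j + (q + 1) * Δ with hz
  have hzlt : w j < w z := chain q le_rfl
  have hzlast : w (j + q * Δ) < w z := step q le_rfl
  have hz2 : z ≤ (e + 1) * Δ := by omega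
  by_cases hzl : Leftmost w z
  · exact ⟨z, hq2, hz2, hzl⟩
  · have hex : ∃ p, 1 ≤ p ∧ p < z ∧ w p = w z := by
      unfold Leftmost at hzl
      push_neg at hzl
      obtain ⟨p, h1, h2, h3⟩ := hzl
      exact ⟨p, h1, h2, h3⟩
    set j2 : ℕ := Nat.find hex with hj2def
    obtain ⟨hj21, hj2z, hj2eq⟩ := Nat.find_spec hex
    have hj2lm : Leftmost w j2 := by
      intro u hu1 hu2 hequ
      exact Nat.find_min hex hu2 ⟨hu1, lt_trans hu2 hj2z, hequ.trans hj2eq⟩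
    by_cases hj2b : e * Δ < j2
    · exact ⟨j2, hj2b, le_trans (le_of_lt hj2z) hz2, hj2lm⟩
    · push_neg at hj2b
      have hinc2 : w j2 < w (j2 + Δ) := by
        have h1 : w (j + q * Δ) < w j2 := by rw [hj2eq]; exact hzlast
        have := (H (j + q * Δ) j2 (by omega) (by omega) hj21 (by omega)).mp h1
        have e1 : j + q * Δ + Δ = z := by rw [hz]; ring
        rw [e1, ← hj2eq] at this
        exact this
      have hmes : ((Finset.Icc 1 ((e+1)*Δ)).filter (fun p => w j2 < w p)).card <
          ((Finset.Icc 1 ((e+1)*Δ)).filter (fun p => w j < w p)).card := by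
        apply Finset.card_lt_card
        constructor
        · intro p hp
          simp only [Finset.mem_filter] at hp ⊢
          refine ⟨hp.1, lt_trans ?_ hp.2⟩
          rw [hj2eq]; exact hzlt
        · intro hsub
          have hzmem : z ∈ (Finset.Icc 1 ((e+1)*Δ)).filter (fun p => w j < w p) := by
            simp only [Finset.mem_filter, Finset.mem_Icc]
            exact ⟨⟨by omega, hz2⟩, hzlt⟩
          have := hsub hzmem
          simp only [Finset.mem_filter] at this
          rw [hj2eq] at this
          exact absurd this.2 (lt_irrefl _)
      exact ih _ (lt_of_lt_of_le hmes hcard) j2 le_rfl hj21 hj2b hj2lm hinc2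


/-- If b is an op-border of u = s[1..m] with 0 < b < m, Δ = m − b,
f = ⌊m/Δ⌋ ≥ 2, and there is a leftmost occurrence x with Δ < x ≤ 2Δ, then there is
an r with 1 ≤ r ≤ Δ such that r + p·Δ is a leftmost occurrence for all 0 ≤ p ≤ f − 1. -/
theorem leftmost_in_all_blocks {α : Type*} [LinearOrder α]
    (w : ℕ → α) (m b : ℕ) (hb0 : 0 < b) (hbm : b < m)
    (hbord : OpBorderAt w 1 m b) (hf : 2 ≤ m / (m - b))
    (x : ℕ) (hx1 : m - b < x) (hx2 : x ≤ 2 * (m - b)) (hlm : Leftmost w x) :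
    ∃ r : ℕ, 1 ≤ r ∧ r ≤ m - b ∧
      ∀ p : ℕ, p ≤ m / (m - b) - 1 → Leftmost w (r + p * (m - b)) := by
  set Δ : ℕ := m - b with hΔdef
  have hΔ : 1 ≤ Δ := by omega
  set f : ℕ := m / Δ with hfdef
  have hfm : f * Δ ≤ m := by
    rw [hfdef]; exact Nat.div_mul_le_self m Δ
  have hbΔ : b = m - Δ := by omega
  have hfexp : f * Δ = (f - 1) * Δ + Δ := by
    have : f - 1 + 1 = f := by omega
    calc f * Δ = (f - 1 + 1) * Δ := by rw [this]
    _ = (f - 1) * Δ + Δ := by ring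
  have heb : (f - 1) * Δ ≤ b := by omega
  -- basic order-isomorphism transfer
  have Hle : ∀ i j : ℕ, 1 ≤ i → i ≤ b → 1 ≤ j → j ≤ b →
      (w i ≤ w j ↔ w (i + Δ) ≤ w (j + Δ)) := by
    intro i j hi1 hib hj1 hjb
    have := hbord.2 (i - 1) (j - 1) (by omega) (by omega)
    have e1 : 1 + (i - 1) = i := by omega
    have e2 : 1 + (j - 1) = j := by omega
    have e3 : 1 + (m - b) + (i - 1) = i + Δ := by omega
    have e4 : 1 + (m - b) + (j - 1) = j + Δ := by omega
    rwa [e1, e2, e3, e4] at this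
  have Hlt : ∀ i j : ℕ, 1 ≤ i → i ≤ b → 1 ≤ j → j ≤ b →
      (w i < w j ↔ w (i + Δ) < w (j + Δ)) := by
    intro i j hi1 hib hj1 hjb
    rw [lt_iff_not_ge, lt_iff_not_ge, not_iff_not]
    exact Hle j i hj1 hjb hi1 hib
  have Heq : ∀ i j : ℕ, 1 ≤ i → i ≤ b → 1 ≤ j → j ≤ b →
      (w i = w j ↔ w (i + Δ) = w (j + Δ)) := by
    intro i j hi1 hib hj1 hjb
    rw [le_antisymm_iff, le_antisymm_iff]
    exact and_congr (Hle i j hi1 hib hj1 hjb) (Hle j i hj1 hjb hi1 hib)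
  -- Step 1: find a leftmost position in block f
  have hyex : ∃ y, (f - 1) * Δ < y ∧ y ≤ f * Δ ∧ Leftmost w y := by
    by_cases hf2 : f = 2
    · refine ⟨x, ?_, ?_, hlm⟩
      · rw [hf2]; simpa using hx1
      · rw [hf2]; omega
    · have hf3 : 3 ≤ f := by omega
      have hxb : x ≤ (f - 1) * Δ := by
        have : 2 * Δ ≤ (f - 1) * Δ := Nat.mul_le_mul_right Δ (by omega)
        omega
      have hne : w (x - Δ) ≠ w x := fun h => hlm (x - Δ) (by omega) (by omega) h
      have hee : f - 1 - 1 + 1 = f - 1 := by omega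
      rcases hne.lt_or_gt with hcase | hcase
      · -- increasing case
        have hinc : w x < w (x + Δ) := by
          have := (Hlt (x - Δ) x (by omega) (by omega) (by omega) (by omega)).mp hcase
          have e1 : x - Δ + Δ = x := by omega
          rwa [e1] at this
        have := aux_block w Δ b (f - 1) hΔ heb Hlt
          (((Finset.Icc 1 ((f - 1 + 1) * Δ)).filter (fun p => w x < w p)).card) x
          le_rfl (by omega) hxb hlm hinc
        obtain ⟨y, hy1, hy2, hy3⟩ := this
        refine ⟨y, hy1, ?_, hy3⟩
        have : (f - 1 + 1) * Δ = f * Δ := by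
          congr 1; omega
        omega
      · -- decreasing case: dualize
        have Hlt' : ∀ i j : ℕ, 1 ≤ i → i ≤ b → 1 ≤ j → j ≤ b →
            ((OrderDual.toDual ∘ w) i < (OrderDual.toDual ∘ w) j ↔
              (OrderDual.toDual ∘ w) (i + Δ) < (OrderDual.toDual ∘ w) (j + Δ)) := by
          intro i j hi1 hib hj1 hjb
          simpa using Hlt j i hj1 hjb hi1 hib
        have hlm' : Leftmost (OrderDual.toDual ∘ w) x := hlm
        have hinc' : (OrderDual.toDual ∘ w) x < (OrderDual.toDual ∘ w) (x + Δ) := by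
          have := (Hlt x (x - Δ) (by omega) (by omega) (by omega) (by omega)).mp hcase
          have e1 : x - Δ + Δ = x := by omega
          rw [e1] at this
          simpa using this
        have := aux_block (OrderDual.toDual ∘ w) Δ b (f - 1) hΔ heb Hlt'
          (((Finset.Icc 1 ((f - 1 + 1) * Δ)).filter
              (fun p => (OrderDual.toDual ∘ w) x < (OrderDual.toDual ∘ w) p)).card) x
          le_rfl (by omega) hxb hlm' hinc'
        obtain ⟨y, hy1, hy2, hy3⟩ := this
        refine ⟨y, hy1, ?_, hy3⟩
        have : (f - 1 + 1) * Δ = f * Δ := by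
          congr 1; omega
        omega
  obtain ⟨y, hy1, hy2, hylm⟩ := hyex
  -- Step 2: propagate leftmostness downward
  have down : ∀ q : ℕ, q ≤ f - 1 → Leftmost w (y - q * Δ) := by
    intro q
    induction q with
    | zero => intro _; simpa using hylm
    | succ q ihq =>
      intro hq
      have hqΔ : (q + 1) * Δ ≤ (f - 1) * Δ := Nat.mul_le_mul_right Δ (by omega)
      have hqexp : (q + 1) * Δ = q * Δ + Δ := by ring
      have hprev : Leftmost w (y - q * Δ) := ihq (by omega)
      intro u hu1 hu2 hequ
      have hub : u ≤ b := by omega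
      have h1 : 1 ≤ y - (q + 1) * Δ := by omega
      have h2 : y - (q + 1) * Δ ≤ b := by omega
      have := (Heq u (y - (q + 1) * Δ) hu1 hub h1 h2).mp hequ
      have e1 : y - (q + 1) * Δ + Δ = y - q * Δ := by omega
      rw [e1] at this
      exact hprev (u + Δ) (by omega) (by omega) this
  refine ⟨y - (f - 1) * Δ, by omega, by omega, ?_⟩
  intro p hp
  have hpΔ : p * Δ ≤ (f - 1) * Δ := Nat.mul_le_mul_right Δ hp
  have hsub : (f - 1 - p) * Δ = (f - 1) * Δ - p * Δ := Nat.sub_mul _ _ _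
  have e1 : y - (f - 1) * Δ + p * Δ = y - (f - 1 - p) * Δ := by omega
  rw [e1]
  exact down (f - 1 - p) (by omega)
end

section
/- Let s be a string, k ≥ 1 an integer, and let ℓ < ℓ' < ℓ'' be integers with 2^{k−1} ≤ ℓ, ℓ'' < 2^k and 2ℓ'' ≤ |s|, such that the prefixes s[1..2ℓ], s[1..2ℓ'] and s[1..2ℓ''] are all order-preserving squares. Let Δ = ℓ' − ℓ, Δ' = ℓ'' − ℓ', f = ⌊ℓ/Δ⌋ and f' = ⌊ℓ'/Δ'⌋. Then either for every j with 1 ≤ j ≤ f there is a leftmost occurrence x of s with (j−1)·Δ < x ≤ j·Δ, or for every j with 1 ≤ j ≤ f' there is a leftmost occurrence x of s with (j−1)·Δ' < x ≤ j·Δ'. -/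
/-!
Suppose both alternatives fail, say no leftmost occurrence lies in `((j - 1)Δ, jΔ]`. The
op-squares with arms `ℓ` and `ℓ' = ℓ + Δ` make `s[1..ℓ]` order-isomorphic to its shift by `Δ`,
so there is no leftmost occurrence in all of `((j - 1)Δ, ℓ]`. Hence every character of
`s[Δ + 1..ℓ]` occurs in `s[1..ℓ - Δ]`, and two order-isomorphic words one of which only uses
characters of the other are equal: `s[1..ℓ]` has period `Δ`. Likewise `s[1..ℓ']` has period
`Δ'`. Since `ℓ'' < 2ℓ` we have `Δ + Δ' ≤ ℓ`, and chasing a character of the second arm of the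
`ℓ'`-square through both periods and both squares finds it in the first arm. So the two arms of
that square are equal, a contradiction.
-/

section OrderIsomorphic

variable {ι α : Type*} [LinearOrder α] {s : Finset ι} {u v : ι → α}

/-- Take `m` with `u m < v m` and `v m` maximal; the character `v m` occurs in `u` at some `b`,
and order-isomorphism forces `u b = v m < v b`, contradicting maximality. -/
theorem not_lt_of_le_iff_le_of_forall_exists_eq (h : ∀ a ∈ s, ∀ b ∈ s, u a ≤ u b ↔ v a ≤ v b)
    (hvu : ∀ a ∈ s, ∃ b ∈ s, u b = v a) {a : ι} (ha : a ∈ s) : ¬ u a < v a := by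
  intro hlt
  obtain ⟨m, hm, hmax⟩ :=
    (s.filter fun a => u a < v a).exists_max_image v ⟨a, Finset.mem_filter.2 ⟨ha, hlt⟩⟩
  rw [Finset.mem_filter] at hm
  obtain ⟨b, hb, hbm⟩ := hvu m hm.1
  have hv : v m < v b := by
    simpa only [not_le] using (h b hb m hm.1).not.1 (not_le.2 (hbm ▸ hm.2))
  exact (hmax b (Finset.mem_filter.2 ⟨hb, hbm ▸ hv⟩)).not_gt hv

theorem eq_of_le_iff_le_of_forall_exists_eq (h : ∀ a ∈ s, ∀ b ∈ s, u a ≤ u b ↔ v a ≤ v b)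
    (hvu : ∀ a ∈ s, ∃ b ∈ s, u b = v a) {a : ι} (ha : a ∈ s) : u a = v a :=
  le_antisymm
    (not_lt.1 <| not_lt_of_le_iff_le_of_forall_exists_eq (α := αᵒᵈ) (fun a ha b hb => h b hb a ha)
      hvu ha)
    (not_lt.1 <| not_lt_of_le_iff_le_of_forall_exists_eq h hvu ha)

end OrderIsomorphic

namespace OpIso

variable {α : Type*} [LinearOrder α] {w : ℕ → α} {i j ℓ : ℕ}

theorem symm (h : OpIso w i j ℓ) : OpIso w j i ℓ :=
  fun a b ha hb => (h a b ha hb).symm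

theorem trans {k : ℕ} (h : OpIso w i j ℓ) (h' : OpIso w j k ℓ) : OpIso w i k ℓ :=
  fun a b ha hb => (h a b ha hb).trans (h' a b ha hb)

theorem shift (h : OpIso w i j ℓ) {d m : ℕ} (hdm : d + m ≤ ℓ) : OpIso w (i + d) (j + d) m :=
  fun a b ha hb => by simpa only [add_assoc] using h (d + a) (d + b) (by omega) (by omega)

theorem eq_of_forall_exists_eq (h : OpIso w i j ℓ)
    (hji : ∀ a < ℓ, ∃ b < ℓ, w (i + b) = w (j + a)) {a : ℕ} (ha : a < ℓ) :
    w (i + a) = w (j + a) :=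
  eq_of_le_iff_le_of_forall_exists_eq (s := Finset.range ℓ) (u := fun a => w (i + a))
    (v := fun a => w (j + a)) 
    (fun a ha b hb => h a b (Finset.mem_range.1 ha) (Finset.mem_range.1 hb))
    (by simpa using hji) (Finset.mem_range.2 ha)

/-- Both windows are order-isomorphic to the one at `i + ℓ + d`. -/
theorem shift_of_squares {d m : ℕ} (hsq : OpIso w i (i + ℓ) ℓ)
    (hsq' : OpIso w i (i + (ℓ + d)) (ℓ + d)) (hm : m + d ≤ ℓ) : OpIso w i (i + d) m := by
  have h₁ : OpIso w (i + d) (i + ℓ + d) m := hsq.shift (by omega)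
  have h₂ : OpIso w i (i + ℓ + d) m := by
    simpa [add_assoc] using hsq'.shift (d := 0) (m := m) (by omega)
  exact h₂.trans h₁.symm

end OpIso

section Leftmost

variable {α : Type*} [LinearOrder α] {w : ℕ → α}

def NoLeftmostIn (w : ℕ → α) (a b : ℕ) : Prop :=
  ∀ x, a < x → x ≤ b → ¬ Leftmost w x

def IsPeriodOfPrefix (w : ℕ → α) (d L : ℕ) : Prop :=
  ∀ x, 1 ≤ x → x + d ≤ L → w x = w (x + d)

theorem not_leftmost_iff {x : ℕ} : ¬ Leftmost w x ↔ ∃ y, 1 ≤ y ∧ y < x ∧ w y = w x := by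
  simp [Leftmost]

theorem NoLeftmostIn.exists_eq {a b : ℕ} (h : NoLeftmostIn w a b) {x : ℕ} (hx : 1 ≤ x)
    (hxb : x ≤ b) : ∃ y, 1 ≤ y ∧ y ≤ a ∧ w y = w x := by
  induction x using Nat.strong_induction_on with
  | _ x ih =>
    by_cases hxa : x ≤ a
    · exact ⟨x, hx, hxa, rfl⟩
    · obtain ⟨y, hy, hyx, hyx'⟩ := not_leftmost_iff.1 (h x (by omega) hxb)
      obtain ⟨z, hz, hza, hzy⟩ := ih y hyx hy (by omega)
      exact ⟨z, hz, hza, hzy.trans hyx'⟩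

theorem IsPeriodOfPrefix.noLeftmostIn {d L : ℕ} (h : IsPeriodOfPrefix w d L) (hd : 0 < d) :
    NoLeftmostIn w d L := fun x hdx hxL => by
  have hx := h (x - d) (by omega) (by omega)
  rw [Nat.sub_add_cancel hdx.le] at hx
  exact not_leftmost_iff.2 ⟨x - d, by omega, by omega, hx⟩

theorem OpIso.not_leftmost_add {d m x : ℕ} (h : OpIso w 1 (1 + d) m) (hx : 1 ≤ x) (hxm : x ≤ m)
    (hlx : ¬ Leftmost w x) : ¬ Leftmost w (x + d) := by
  obtain ⟨y, hy, hyx, hyx'⟩ := not_leftmost_iff.1 hlx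
  refine not_leftmost_iff.2 ⟨y + d, by omega, by omega, ?_⟩
  have := (h.eq_iff (a := y - 1) (b := x - 1) (by omega) (by omega)).1 (by
    rwa [Nat.add_sub_cancel' hy, Nat.add_sub_cancel' hx])
  convert this using 2 <;> omega

theorem OpIso.noLeftmostIn_of_block {d m a : ℕ} (h : OpIso w 1 (1 + d) m) (hd : 0 < d)
    (hblock : NoLeftmostIn w a (a + d)) : NoLeftmostIn w a (m + d) := by
  intro x hax hxm
  induction x using Nat.strong_induction_on with
  | _ x ih =>
    by_cases hxa : x ≤ a + d
    · exact hblock x hax hxa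
    · have := h.not_leftmost_add (x := x - d) (by omega) (by omega)
        (ih (x - d) (by omega) (by omega) (by omega))
      rwa [Nat.sub_add_cancel (by omega)] at this

/-- Every character of `w[1 + d..m + d]` already occurs in `w[1..a]`, so the
order-isomorphism between `w[1..m]` and `w[1 + d..m + d]` is an equality. -/
theorem OpIso.isPeriodOfPrefix {d m a : ℕ} (h : OpIso w 1 (1 + d) m) (hd : 0 < d) (ham : a ≤ m)
    (hblock : NoLeftmostIn w a (a + d)) : IsPeriodOfPrefix w d (m + d) := by
  have hocc := h.noLeftmostIn_of_block hd hblock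
  intro x hx hxd
  have := h.eq_of_forall_exists_eq (a := x - 1) (fun b hb => ?_) (by omega)
  · convert this using 2 <;> omega
  obtain ⟨y, hy, hya, hyb⟩ := hocc.exists_eq (x := 1 + d + b) (by omega) (by omega)
  exact ⟨y - 1, by omega, by rwa [Nat.add_sub_cancel' hy]⟩

end Leftmost

section OpSquarePrefixes

variable {α : Type*} [LinearOrder α] {w : ℕ → α} {ℓ ℓ' : ℕ}

theorem isPeriodOfPrefix_of_opSquares (hsq : OpIso w 1 (1 + ℓ) ℓ)
    (hsq' : OpIso w 1 (1 + ℓ') ℓ') (hlt : ℓ < ℓ') {j : ℕ} (hj : 1 ≤ j)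
    (hjℓ : j * (ℓ' - ℓ) ≤ ℓ) (hblock : NoLeftmostIn w ((j - 1) * (ℓ' - ℓ)) (j * (ℓ' - ℓ))) :
    IsPeriodOfPrefix w (ℓ' - ℓ) ℓ := by
  set d := ℓ' - ℓ
  have hpred : (j - 1) * d = j * d - d := Nat.sub_one_mul j d
  have hdj : d ≤ j * d := Nat.le_mul_of_pos_left d hj
  have hiso : OpIso w 1 (1 + d) (ℓ - d) :=
    hsq.shift_of_squares (by rwa [show ℓ + d = ℓ' by omega]) (by omega)
  have := hiso.isPeriodOfPrefix (a := (j - 1) * d) (by omega) (by omega)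
    (by rwa [show (j - 1) * d + d = j * d by omega])
  rwa [Nat.sub_add_cancel (by omega)] at this

/-- Reduce `1 + a` modulo `d'`, carry it across the `ℓ'`-square to `ℓ + (ℓ' - ℓ) + r'`, reduce
`ℓ' - ℓ + r' ≤ ℓ` modulo `ℓ' - ℓ` and carry it back across the `ℓ`-square: every character of
the second arm of the `ℓ'`-square occurs in its first arm. -/
theorem eq_of_opSquares_of_isPeriodOfPrefix (hsq : OpIso w 1 (1 + ℓ) ℓ)
    (hsq' : OpIso w 1 (1 + ℓ') ℓ') (hlt : ℓ < ℓ') {d' : ℕ} (hd' : 0 < d')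
    (hP : IsPeriodOfPrefix w (ℓ' - ℓ) ℓ) (hP' : IsPeriodOfPrefix w d' ℓ')
    (hspan : ℓ' - ℓ + d' ≤ ℓ) {a : ℕ} (ha : a < ℓ') : w (1 + a) = w (1 + ℓ' + a) := by
  refine hsq'.eq_of_forall_exists_eq (fun a ha => ?_) ha
  obtain ⟨r', hr', hr'd', hr'a⟩ :=
    (hP'.noLeftmostIn hd').exists_eq (x := 1 + a) (by omega) (by omega)
  have e' : w (1 + ℓ' + (r' - 1)) = w (1 + ℓ' + a) :=
    (hsq'.eq_iff (by omega) ha).1 (by rwa [Nat.add_sub_cancel' hr'])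
  obtain ⟨r, hr, hrd, hrr'⟩ :=
    (hP.noLeftmostIn (by omega)).exists_eq (x := ℓ' - ℓ + r') (by omega) (by omega)
  have e : w (1 + ℓ + (r - 1)) = w (1 + ℓ + (ℓ' - ℓ + r' - 1)) :=
    (hsq.eq_iff (by omega) (by omega)).1
      (by rwa [Nat.add_sub_cancel' hr, Nat.add_sub_cancel' (by omega : 1 ≤ ℓ' - ℓ + r')])
  refine ⟨ℓ + (r - 1), by omega, ?_⟩
  rw [← e', ← add_assoc, e]
  congr 1
  omega

end OpSquarePrefixes

theorem leftmost_in_every_block_general {α : Type*} [LinearOrder α]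
    (w : ℕ → α) (k ℓ ℓ' ℓ'' : ℕ)
    (h1 : 2 ^ (k - 1) ≤ ℓ) (h2 : ℓ < ℓ') (h3 : ℓ' < ℓ'') (h4 : ℓ'' < 2 ^ k)
    (hsq : IsOpSquareAt w 1 ℓ) (hsq' : IsOpSquareAt w 1 ℓ') (hsq'' : IsOpSquareAt w 1 ℓ'') :
    (∀ j : ℕ, 1 ≤ j → j ≤ ℓ / (ℓ' - ℓ) →
        ∃ x : ℕ, Leftmost w x ∧ (j - 1) * (ℓ' - ℓ) < x ∧ x ≤ j * (ℓ' - ℓ)) ∨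
    (∀ j : ℕ, 1 ≤ j → j ≤ ℓ' / (ℓ'' - ℓ') →
        ∃ x : ℕ, Leftmost w x ∧ (j - 1) * (ℓ'' - ℓ') < x ∧ x ≤ j * (ℓ'' - ℓ')) := by
  by_contra! h
  obtain ⟨⟨j, hj, hjf, hblock⟩, ⟨j', hj', hjf', hblock'⟩⟩ := h
  have hspan : ℓ'' < 2 * ℓ := calc
    ℓ'' < 2 ^ k := h4
    _ ≤ 2 ^ (k - 1 + 1) := Nat.pow_le_pow_right two_pos (by omega)
    _ = 2 * 2 ^ (k - 1) := pow_succ' 2 (k - 1)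
    _ ≤ 2 * ℓ := by omega
  have hP := isPeriodOfPrefix_of_opSquares hsq.1 hsq'.1 h2 hj
    ((Nat.le_div_iff_mul_le (by omega)).1 hjf) fun x hx hxj hx' => (hblock x hx' hx).not_ge hxj
  have hP' := isPeriodOfPrefix_of_opSquares hsq'.1 hsq''.1 h3 hj'
    ((Nat.le_div_iff_mul_le (by omega)).1 hjf') fun x hx hxj hx' => (hblock' x hx' hx).not_ge hxj
  obtain ⟨a, ha, hne⟩ := hsq'.2
  exact hne (eq_of_opSquares_of_isPeriodOfPrefix hsq.1 hsq'.1 h2 (by omega) hP hP' (by omega) ha)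

/-- Given three op-square prefixes s[1..2ℓ], s[1..2ℓ'], s[1..2ℓ''] with
2^{k−1} ≤ ℓ < ℓ' < ℓ'' < 2^k, Δ = ℓ' − ℓ, Δ' = ℓ'' − ℓ', f = ⌊ℓ/Δ⌋, f' = ⌊ℓ'/Δ'⌋:
either every block ((j−1)Δ, jΔ] for 1 ≤ j ≤ f contains a leftmost occurrence, or
every block ((j−1)Δ', jΔ'] for 1 ≤ j ≤ f' contains a leftmost occurrence. -/
theorem leftmost_in_every_block {α : Type*} [LinearOrder α]
    (w : ℕ → α) (n k ℓ ℓ' ℓ'' : ℕ) (hk : 1 ≤ k)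
    (h1 : 2 ^ (k - 1) ≤ ℓ) (h2 : ℓ < ℓ') (h3 : ℓ' < ℓ'') (h4 : ℓ'' < 2 ^ k)
    (h5 : 2 * ℓ'' ≤ n)
    (hsq : IsOpSquareAt w 1 ℓ) (hsq' : IsOpSquareAt w 1 ℓ') (hsq'' : IsOpSquareAt w 1 ℓ'') :
    (∀ j : ℕ, 1 ≤ j → j ≤ ℓ / (ℓ' - ℓ) →
        ∃ x : ℕ, Leftmost w x ∧ (j - 1) * (ℓ' - ℓ) < x ∧ x ≤ j * (ℓ' - ℓ)) ∨
    (∀ j : ℕ, 1 ≤ j → j ≤ ℓ' / (ℓ'' - ℓ') →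
        ∃ x : ℕ, Leftmost w x ∧ (j - 1) * (ℓ'' - ℓ') < x ∧ x ≤ j * (ℓ'' - ℓ')) :=
  leftmost_in_every_block_general w k ℓ ℓ' ℓ'' h1 h2 h3 h4 hsq hsq' hsq''
end

section
/- Let w be a string of length n over an alphabet of size σ. For positions 1 ≤ i' ≤ i ≤ n and an integer k ≥ 0, say that i is k-active at i' if i is a leftmost occurrence in the suffix w[i'..n] (i.e., w[j] ≠ w[i] for all i' ≤ j < i) and 2^k ≤ i − i' + 1 < 2^{k+1}. For each position i, let k_i be the largest k such that i is k-active at some i' (this is well defined since i is 0-active at i' = i). Then Σ_{i=1}^{n} Σ_{k=0}^{k_i} 2^k ≤ n + 2σn. -/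
/-- Position i is k-active at i' (in a string w of length n): 1 ≤ i' ≤ i ≤ n, i is a
leftmost occurrence in the suffix w[i'..n], and 2^k ≤ i − i' + 1 < 2^{k+1}. -/
def ActiveAt {α : Type*} [LinearOrder α] (w : ℕ → α) (n i i' k : ℕ) : Prop :=
  1 ≤ i' ∧ i' ≤ i ∧ i ≤ n ∧ (∀ j : ℕ, i' ≤ j → j < i → w j ≠ w i) ∧
    2 ^ k ≤ i - i' + 1 ∧ i - i' + 1 < 2 ^ (k + 1)

/-! A witness `i'ᵢ` of `K i`-activity gives `∑_{k ≤ K i} 2^k = 2^(K i + 1) - 1 ≤ 2 (i - i'ᵢ) + 1`,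
so it suffices that `∑ᵢ (i - i'ᵢ) ≤ σ n`. Each pair `(i, j)` with `i'ᵢ ≤ j < i` is determined
by `(w i, j)`: two positions `i < i''` sharing the letter and the index `j` would put `i` inside
the window `[i'_{i''}, i'')`, in which `i''` is a leftmost occurrence. -/

open Finset

lemma sum_range_two_pow (m : ℕ) : ∑ k ∈ range m, 2 ^ k = 2 ^ m - 1 := by
  simpa using Nat.geomSum_eq le_rfl m

lemma ActiveAt.sum_range_two_pow_le {α : Type*} [LinearOrder α] {w : ℕ → α} {n i i' k : ℕ}
    (h : ActiveAt w n i i' k) : ∑ j ∈ range (k + 1), 2 ^ j ≤ 2 * (i - i') + 1 := by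
  obtain ⟨-, -, -, -, hle, -⟩ := h
  rw [sum_range_two_pow, pow_succ]
  omega

lemma ActiveAt.Ico_subset_Icc {α : Type*} [LinearOrder α] {w : ℕ → α} {n i i' k : ℕ}
    (h : ActiveAt w n i i' k) : Ico i' i ⊆ Icc 1 n := by
  obtain ⟨h1, -, hin, -⟩ := h
  exact Ico_subset_Icc_self.trans (Icc_subset_Icc h1 (by omega))

lemma sum_window_length_le {β : Type*} [Fintype β] (w : ℕ → β) (f : ℕ → ℕ) (s t : Finset ℕ)
    (hwindow : ∀ i ∈ s, Ico (f i) i ⊆ t)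
    (hleftmost : ∀ i ∈ s, ∀ j, f i ≤ j → j < i → w j ≠ w i) :
    ∑ i ∈ s, (i - f i) ≤ Fintype.card β * #t := by
  have hsum : ∑ i ∈ s, (i - f i) = #(s.sigma fun i ↦ Ico (f i) i) := by
    simp [card_sigma]
  rw [hsum, ← card_univ, ← card_product]
  refine card_le_card_of_injOn (fun p ↦ (w p.1, p.2)) ?_ ?_
  · intro p hp
    simp only [coe_sigma, Set.mem_sigma_iff, mem_coe] at hp
    simpa using hwindow p.1 hp.1 hp.2
  · rintro ⟨i, j⟩ hp ⟨i'', j''⟩ hq heq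
    simp only [coe_sigma, Set.mem_sigma_iff, mem_coe, mem_Ico] at hp hq
    simp only [Prod.mk.injEq] at heq
    obtain ⟨hw, rfl⟩ := heq
    rcases lt_trichotomy i i'' with h | rfl | h
    · exact absurd hw (hleftmost i'' hq.1 i (by omega) h)
    · rfl
    · exact absurd hw.symm (hleftmost i hp.1 i'' (by omega) h)

/-- With k_i the largest k such that i is k-active at some i',
Σ_{i=1}^{n} Σ_{k=0}^{k_i} 2^k ≤ n + 2σn. -/
theorem sum_of_active_ranges (σ : ℕ) (α : Type) [LinearOrder α] [Fintype α]
    (hcard : Fintype.card α = σ) (n : ℕ) (w : ℕ → α) (K : ℕ → ℕ)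
    (hK : ∀ i : ℕ, 1 ≤ i → i ≤ n →
      (∃ i' : ℕ, ActiveAt w n i i' (K i)) ∧
      (∀ k i' : ℕ, ActiveAt w n i i' k → k ≤ K i)) :
    ∑ i ∈ Finset.Icc 1 n, ∑ k ∈ Finset.range (K i + 1), 2 ^ k ≤ n + 2 * σ * n := by
  choose! f hf using fun i hi₁ hin ↦ (hK i hi₁ hin).1
  have hactive : ∀ i ∈ Icc 1 n, ActiveAt w n i (f i) (K i) := fun i hi ↦
    hf i (mem_Icc.1 hi).1 (mem_Icc.1 hi).2
  have hwindows : ∑ i ∈ Icc 1 n, (i - f i) ≤ σ * n := by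
    simpa [hcard] using sum_window_length_le w f (Icc 1 n) (Icc 1 n)
      (fun i hi ↦ (hactive i hi).Ico_subset_Icc) (fun i hi ↦ (hactive i hi).2.2.2.1)
  calc ∑ i ∈ Icc 1 n, ∑ k ∈ range (K i + 1), 2 ^ k
      ≤ ∑ i ∈ Icc 1 n, (2 * (i - f i) + 1) :=
        sum_le_sum fun i hi ↦ (hactive i hi).sum_range_two_pow_le
    _ = 2 * ∑ i ∈ Icc 1 n, (i - f i) + n := by simp [sum_add_distrib, mul_sum]
    _ ≤ n + 2 * σ * n := by rw [mul_assoc]; omega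
end

section
/- For a string w of length n over a linearly ordered alphabet, define prev_<(w, i) = |{k < i : w[k] < w[i]}| and prev_=(w, i) = |{k < i : w[k] = w[i]}|, let φ(w, i) = (prev_<(w, i), prev_=(w, i)), and let code(w) = (φ(w, 1), φ(w, 2), …, φ(w, n)). Then for any two strings w and w' of the same length, code(w) = code(w') if and only if w ≈ w'. -/
/-- prev_<(w, i): the number of positions k with 1 ≤ k < i and w[k] < w[i]. -/
def prevLt {α : Type*} [LinearOrder α] (w : ℕ → α) (i : ℕ) : ℕ :=
  ((Finset.Ico 1 i).filter (fun j => w j < w i)).card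

/-- prev_=(w, i): the number of positions k with 1 ≤ k < i and w[k] = w[i]. -/
def prevEq {α : Type*} [LinearOrder α] (w : ℕ → α) (i : ℕ) : ℕ :=
  ((Finset.Ico 1 i).filter (fun j => w j = w i)).card

lemma filter_eq_of_card' {s : Finset ℕ} {p q : ℕ → Prop} [DecidablePred p] [DecidablePred q]
    (h1 : ∀ a ∈ s, ∀ b ∈ s, p a → ¬ q a → q b → p b)
    (hcard : (s.filter p).card = (s.filter q).card) :
    s.filter p = s.filter q := by
  have hsub : s.filter p ⊆ s.filter q := by
    intro x hx
    by_contra hxq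
    have hxs : x ∈ s := (Finset.mem_filter.mp hx).1
    have hpx : p x := (Finset.mem_filter.mp hx).2
    have hqx : ¬ q x := fun h => hxq (Finset.mem_filter.mpr ⟨hxs, h⟩)
    have hqp : s.filter q ⊆ s.filter p := by
      intro b hb
      have hbs := (Finset.mem_filter.mp hb).1
      exact Finset.mem_filter.mpr ⟨hbs, h1 x hxs b hbs hpx hqx (Finset.mem_filter.mp hb).2⟩
    have : s.filter q ⊂ s.filter p := ⟨hqp, fun h => hxq (h hx)⟩
    exact absurd hcard (Nat.ne_of_gt (Finset.card_lt_card this))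
  exact Finset.eq_of_subset_of_card_le hsub hcard.symm.le


lemma card_le_split {γ : Type*} [LinearOrder γ] (v : ℕ → γ) (j : ℕ) :
    ((Finset.Ico 1 j).filter (fun k => v k ≤ v j)).card = prevLt v j + prevEq v j := by
  unfold prevLt prevEq
  rw [← Finset.card_union_of_disjoint, ← Finset.filter_or]
  · apply congrArg
    apply Finset.filter_congr
    intro k _
    simp [le_iff_lt_or_eq]
  · rw [Finset.disjoint_left]
    intro a ha hb
    exact absurd (Finset.mem_filter.mp hb).2 (ne_of_lt (Finset.mem_filter.mp ha).2)

/-- For two strings of the same length n, code(w) = code(w')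
(i.e., φ(w, i) = φ(w', i) for every position i) if and only if w ≈ w'. -/
theorem code_eq_iff_order_iso (α β : Type) [LinearOrder α] [LinearOrder β]
    (n : ℕ) (w : ℕ → α) (w' : ℕ → β) :
    (∀ i : ℕ, 1 ≤ i → i ≤ n → prevLt w i = prevLt w' i ∧ prevEq w i = prevEq w' i) ↔
      (∀ i j : ℕ, 1 ≤ i → i ≤ n → 1 ≤ j → j ≤ n → (w i ≤ w j ↔ w' i ≤ w' j)) := by
  constructor
  · intro hcode
    have main : ∀ m, m ≤ n → ∀ a b, 1 ≤ a → a ≤ m → 1 ≤ b → b ≤ m →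
        (w a ≤ w b ↔ w' a ≤ w' b) := by
      intro m
      induction m with
      | zero => intro _ a b ha ham _ _; omega
      | succ m ih =>
        intro hmn
        have IH := ih (le_trans (Nat.le_succ m) hmn)
        set j := m + 1 with hj
        have hjn : j ≤ n := hmn
        have hmem : ∀ k, k ∈ Finset.Ico 1 j ↔ (1 ≤ k ∧ k ≤ m) := by
          intro k; rw [Finset.mem_Ico]; omega
        have hLt : (Finset.Ico 1 j).filter (fun k => w k < w j)
            = (Finset.Ico 1 j).filter (fun k => w' k < w' j) := by
          apply filter_eq_of_card'
          · intro a ha b hb hpa hqa hqb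
            have ha' := (hmem a).mp ha
            have hb' := (hmem b).mp hb
            have : w' b ≤ w' a := le_of_lt (lt_of_lt_of_le hqb (not_lt.mp hqa))
            have : w b ≤ w a := (IH b a hb'.1 hb'.2 ha'.1 ha'.2).mpr this
            exact lt_of_le_of_lt this hpa
          · exact (hcode j (by omega) hjn).1
        have hLe : (Finset.Ico 1 j).filter (fun k => w k ≤ w j)
            = (Finset.Ico 1 j).filter (fun k => w' k ≤ w' j) := by
          apply filter_eq_of_card'
          · intro a ha b hb hpa hqa hqb
            have ha' := (hmem a).mp ha
            have hb' := (hmem b).mp hb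
            have : w' b ≤ w' a := le_of_lt (lt_of_le_of_lt hqb (not_le.mp hqa))
            have : w b ≤ w a := (IH b a hb'.1 hb'.2 ha'.1 ha'.2).mpr this
            exact le_trans this hpa
          · rw [card_le_split, card_le_split, (hcode j (by omega) hjn).1,
              (hcode j (by omega) hjn).2]
        have key : ∀ k, 1 ≤ k → k ≤ m →
            ((w k < w j ↔ w' k < w' j) ∧ (w k ≤ w j ↔ w' k ≤ w' j)) := by
          intro k hk1 hkm
          have hks : k ∈ Finset.Ico 1 j := (hmem k).mpr ⟨hk1, hkm⟩
          constructor
          · constructor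
            · intro h
              have := (Finset.ext_iff.mp hLt k).mp (Finset.mem_filter.mpr ⟨hks, h⟩)
              exact (Finset.mem_filter.mp this).2
            · intro h
              have := (Finset.ext_iff.mp hLt k).mpr (Finset.mem_filter.mpr ⟨hks, h⟩)
              exact (Finset.mem_filter.mp this).2
          · constructor
            · intro h
              have := (Finset.ext_iff.mp hLe k).mp (Finset.mem_filter.mpr ⟨hks, h⟩)
              exact (Finset.mem_filter.mp this).2
            · intro h
              have := (Finset.ext_iff.mp hLe k).mpr (Finset.mem_filter.mpr ⟨hks, h⟩)
              exact (Finset.mem_filter.mp this).2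
        intro a b ha ham hb hbm
        by_cases ham' : a ≤ m
        · by_cases hbm' : b ≤ m
          · exact IH a b ha ham' hb hbm'
          · have hbj : b = j := by omega
            subst hbj
            exact (key a ha ham').2
        · have haj : a = j := by omega
          subst haj
          by_cases hbm' : b ≤ m
          · rw [← not_lt, ← not_lt, not_iff_not]
            exact (key b hb hbm').1
          · have hbj : b = j := by omega
            rw [hbj]
            simp
    intro i j hi hin hj hjn
    exact main n le_rfl i j hi hin hj hjn
  · intro hiso i hi hin
    constructor
    · unfold prevLt
      apply congrArg
      apply Finset.filter_congr
      intro k hk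
      rw [Finset.mem_Ico] at hk
      have h1 := hiso k i hk.1 (by omega) hi hin
      have h2 := hiso i k hi hin hk.1 (by omega)
      simp only [lt_iff_le_not_ge, h1, h2]
    · unfold prevEq
      apply congrArg
      apply Finset.filter_congr
      intro k hk
      rw [Finset.mem_Ico] at hk
      have h1 := hiso k i hk.1 (by omega) hi hin
      have h2 := hiso i k hi hin hk.1 (by omega)
      simp only [le_antisymm_iff, h1, h2]
end
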